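/- For every y ∈ ℝ^{I×J}, every z ∈ [0,1]^{I×J}, and every δ ≥ 0, F(y + δz) ≥ F(y) + δ·e^{−nδ}·(z·∇F(y)). (The first case in the proof of Lemma 3.10.) -/

import Mathlib

/-!
Write `S_{j,i}(y) = Σ_{k ≤ i} y_{σ_j(k),j}`, which is linear in `y`. Then `F` is a combination, with
nonnegative weights `v_{σ_j(i),j} − v_{σ_j(i+1),j}`, of the terms `1 − e^{−S_{j,i}(y)}`. Moving to
`y + δz` the term gains `e^{−S_{j,i}(y)}(1 − e^{−δ S_{j,i}(z)})`, and since `0 ≤ S_{j,i}(z) ≤ n` and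
`1 − e^{−x} ≥ x e^{−x}`, this is at least `e^{−S_{j,i}(y)} · δ S_{j,i}(z) · e^{−nδ}`. Exchanging the
order of summation in `z · ∇F(y)` gives exactly the sum of the `e^{−S_{j,i}(y)} S_{j,i}(z)` terms.
-/

/-- The function `F` from the paper. -/
noncomputable def F (n m : ℕ) (v : Fin n → Fin m → ℝ) (σ : Fin m → Equiv.Perm (Fin n))
    (y : Fin n → Fin m → ℝ) : ℝ :=
  ∑ j : Fin m, ∑ i : Fin n,
    (v (σ j i) j - if h : (i : ℕ) + 1 < n then v (σ j ⟨(i : ℕ) + 1, h⟩) j else 0) *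
    (1 - Real.exp (-(∑ k ∈ Finset.Iic i, y (σ j k) j)))

/-- The gradient of `F`: its coordinate at bin `a = σ_j(i)` and item `j` is
`Σ_{l=i}^n (v_{σ_j(l),j} − v_{σ_j(l+1),j})·exp(−Σ_{k=1}^l y_{σ_j(k),j})`. -/
noncomputable def gradF (n m : ℕ) (v : Fin n → Fin m → ℝ) (σ : Fin m → Equiv.Perm (Fin n))
    (y : Fin n → Fin m → ℝ) (a : Fin n) (j : Fin m) : ℝ :=
  ∑ l ∈ Finset.Ici ((σ j).symm a),
    (v (σ j l) j - if h : (l : ℕ) + 1 < n then v (σ j ⟨(l : ℕ) + 1, h⟩) j else 0) *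
    Real.exp (-(∑ k ∈ Finset.Iic l, y (σ j k) j))

open Finset Real

lemma Finset.sum_sum_Ici_eq_sum_sum_Iic {α M : Type*} [Fintype α] [Preorder α]
    [LocallyFiniteOrderTop α] [LocallyFiniteOrderBot α] [AddCommMonoid M] (f : α → α → M) :
    ∑ i, ∑ l ∈ Ici i, f i l = ∑ l, ∑ i ∈ Iic l, f i l :=
  sum_comm' fun i l => by simp

lemma Real.mul_exp_neg_le_one_sub_exp_neg {x c : ℝ} (hx : 0 ≤ x) (hxc : x ≤ c) :
    x * exp (-c) ≤ 1 - exp (-x) :=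
  calc x * exp (-c) ≤ x * exp (-x) := by gcongr
    _ ≤ (exp x - 1) * exp (-x) := by gcongr; linarith [add_one_le_exp x]
    _ = 1 - exp (-x) := by rw [sub_mul, ← exp_add, add_neg_cancel, exp_zero, one_mul]

lemma Real.le_mul_one_sub_exp_neg_add {w s x c : ℝ} (hw : 0 ≤ w) (hx : 0 ≤ x) (hxc : x ≤ c) :
    w * (1 - exp (-s)) + w * exp (-s) * (x * exp (-c)) ≤ w * (1 - exp (-(s + x))) :=
  calc w * (1 - exp (-s)) + w * exp (-s) * (x * exp (-c))
      ≤ w * (1 - exp (-s)) + w * exp (-s) * (1 - exp (-x)) := by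
        gcongr; exact mul_exp_neg_le_one_sub_exp_neg hx hxc
    _ = w * (1 - exp (-(s + x))) := by rw [neg_add, exp_add]; ring

section StepIncrease

variable {n m : ℕ} {v : Fin n → Fin m → ℝ} {σ : Fin m → Equiv.Perm (Fin n)}

variable (v σ) in
def valueDrop (j : Fin m) (i : Fin n) : ℝ :=
  v (σ j i) j - if h : (i : ℕ) + 1 < n then v (σ j ⟨(i : ℕ) + 1, h⟩) j else 0

variable (σ) in
def prefixSum (y : Fin n → Fin m → ℝ) (j : Fin m) (i : Fin n) : ℝ :=
  ∑ k ∈ Iic i, y (σ j k) j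

lemma valueDrop_nonneg (hv : ∀ i j, 0 ≤ v i j) (hσ : ∀ j, Antitone fun i => v (σ j i) j)
    (j : Fin m) (i : Fin n) : 0 ≤ valueDrop v σ j i := by
  unfold valueDrop
  split_ifs with h
  · exact sub_nonneg.2 <| hσ j <| Fin.le_def.2 (Nat.le_succ _)
  · simpa using hv (σ j i) j

lemma prefixSum_add_mul (y z : Fin n → Fin m → ℝ) (δ : ℝ) (j : Fin m) (i : Fin n) :
    prefixSum σ (fun i j => y i j + δ * z i j) j i
      = prefixSum σ y j i + δ * prefixSum σ z j i := by
  simp only [prefixSum, sum_add_distrib, mul_sum]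

lemma prefixSum_nonneg {z : Fin n → Fin m → ℝ} (hz : ∀ i j, 0 ≤ z i j) (j : Fin m) (i : Fin n) :
    0 ≤ prefixSum σ z j i :=
  sum_nonneg fun k _ => hz (σ j k) j

lemma prefixSum_le_card {z : Fin n → Fin m → ℝ} (hz : ∀ i j, z i j ≤ 1) (j : Fin m) (i : Fin n) :
    prefixSum σ z j i ≤ n :=
  calc prefixSum σ z j i ≤ ∑ k ∈ Iic i, (1 : ℝ) := sum_le_sum fun k _ => hz (σ j k) j
    _ = #(Iic i) := by simp
    _ ≤ n := by exact_mod_cast (card_le_univ _).trans_eq (Fintype.card_fin n)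

lemma F_eq_sum_valueDrop (y : Fin n → Fin m → ℝ) :
    F n m v σ y = ∑ j, ∑ i, valueDrop v σ j i * (1 - exp (-prefixSum σ y j i)) := rfl

lemma sum_mul_gradF (y z : Fin n → Fin m → ℝ) :
    ∑ i, ∑ j, z i j * gradF n m v σ y i j
      = ∑ j, ∑ l, valueDrop v σ j l * exp (-prefixSum σ y j l) * prefixSum σ z j l := by
  rw [sum_comm]
  refine sum_congr rfl fun j _ => ?_
  rw [← Equiv.sum_comp (σ j)]
  simp only [gradF, Equiv.symm_apply_apply, mul_sum]
  rw [sum_sum_Ici_eq_sum_sum_Iic]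
  refine sum_congr rfl fun l _ => ?_
  rw [← sum_mul, mul_comm]
  rfl

end StepIncrease

theorem F_step_increase_general (n m : ℕ)
    (v : Fin n → Fin m → ℝ) (hv : ∀ i j, 0 ≤ v i j)
    (σ : Fin m → Equiv.Perm (Fin n))
    (hσ : ∀ j, Antitone fun i => v (σ j i) j)
    (δ : ℝ) (hδ : 0 ≤ δ)
    (y : Fin n → Fin m → ℝ)
    (z : Fin n → Fin m → ℝ) (hz : ∀ i j, z i j ∈ Set.Icc (0 : ℝ) 1) :
    F n m v σ (fun i j => y i j + δ * z i j)
      ≥ F n m v σ y + δ * Real.exp (-(n * δ)) *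
          ∑ i : Fin n, ∑ j : Fin m, z i j * gradF n m v σ y i j := by
  rw [ge_iff_le, F_eq_sum_valueDrop, F_eq_sum_valueDrop, sum_mul_gradF, mul_sum,
    ← sum_add_distrib]
  refine sum_le_sum fun j _ => ?_
  rw [mul_sum, ← sum_add_distrib]
  refine sum_le_sum fun i _ => ?_
  have hz₀ : 0 ≤ prefixSum σ z j i := prefixSum_nonneg (fun i j => (hz i j).1) j i
  have hδz_le : δ * prefixSum σ z j i ≤ n * δ := by
    rw [mul_comm (n : ℝ)]
    exact mul_le_mul_of_nonneg_left (prefixSum_le_card (fun i j => (hz i j).2) j i) hδ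
  rw [prefixSum_add_mul]
  calc _ = valueDrop v σ j i * (1 - exp (-prefixSum σ y j i)) + valueDrop v σ j i *
          exp (-prefixSum σ y j i) * (δ * prefixSum σ z j i * exp (-(n * δ))) := by ring
    _ ≤ _ := le_mul_one_sub_exp_neg_add (valueDrop_nonneg hv hσ j i) (mul_nonneg hδ hz₀) hδz_le

/-- The first case in the proof of Lemma 3.10: for any `y`, `z ∈ [0,1]^{I×J}`, `δ ≥ 0`,
`F(y + δz) ≥ F(y) + δ·e^{−nδ}·(z·∇F(y))`. -/
theorem F_step_increase (n m : ℕ) (hn : 1 ≤ n) (hm : 1 ≤ m)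
    (v : Fin n → Fin m → ℝ) (hv : ∀ i j, 0 ≤ v i j)
    (σ : Fin m → Equiv.Perm (Fin n))
    (hσ : ∀ j, Antitone fun i => v (σ j i) j)
    (δ : ℝ) (hδ : 0 ≤ δ)
    (y : Fin n → Fin m → ℝ)
    (z : Fin n → Fin m → ℝ) (hz : ∀ i j, z i j ∈ Set.Icc (0 : ℝ) 1) :
    F n m v σ (fun i j => y i j + δ * z i j)
      ≥ F n m v σ y + δ * Real.exp (-(n * δ)) *
          ∑ i : Fin n, ∑ j : Fin m, z i j * gradF n m v σ y i j :=
  F_step_increase_general n m v hv σ hσ δ hδ y z hz
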